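/- arXiv:quant-ph/0701173 — 2 statements merged into one kernel-verified Lean document; each statement's English description precedes it below -/
import Mathlib

section
/- If an orthogonal projection P̂ on a finite-dimensional Hilbert space commutes with a unitary U and satisfies P̂ P̂_f = 0 for the projection P̂_f onto the final-vertex subspace, then for every state ρ₀ with P̂ρ₀P̂ = ρ₀ and every t ≥ 1, the first-arrival probability p(t) = Tr{P̂_f U (Q̂_f U)^{t-1} ρ₀ (U† Q̂_f)^{t-1} U† P̂_f} is zero, where Q̂_f = I − P̂_f. -/
open Matrix
open scoped ComplexOrder

/-- If an orthogonal projection `P̂` commutes with the unitary `U` and is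
orthogonal to the final-vertex projection `P̂_f`, then for every state `ρ₀`
supported in the range of `P̂` the first-arrival probability
`p(t) = Tr{P̂_f U (Q̂_f U)^(t-1) ρ₀ (U† Q̂_f)^(t-1) U† P̂_f}` vanishes for all
`t ≥ 1`, where `Q̂_f = I − P̂_f`. -/
theorem dark_state_first_arrival_probability_zero
    {n : Type*} [Fintype n] [DecidableEq n]
    (U Pf P ρ₀ : Matrix n n ℂ)
    (hU : U ∈ Matrix.unitaryGroup n ℂ)
    (hPf2 : Pf * Pf = Pf) (hPfsa : Pfᴴ = Pf)
    (hP2 : P * P = P) (hPsa : Pᴴ = P)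
    (horth : P * Pf = 0) (hcomm : U * P = P * U)
    (hρ : ρ₀.PosSemidef) (hρtr : ρ₀.trace = 1) (hsupp : P * ρ₀ * P = ρ₀) :
    ∀ t : ℕ, 1 ≤ t →
      (Pf * U * ((1 - Pf) * U) ^ (t - 1) * ρ₀ *
        (Uᴴ * (1 - Pf)) ^ (t - 1) * Uᴴ * Pf).trace = 0 := by
  -- Pf * P = 0
  have horth' : Pf * P = 0 := by
    have := congrArg Matrix.conjTranspose horth
    simpa [Matrix.conjTranspose_mul, hPsa, hPfsa] using this
  -- P commutes with (1-Pf)*U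
  have hc1 : P * ((1 - Pf) * U) = ((1 - Pf) * U) * P := by
    have h1 : P * ((1 - Pf) * U) = P * U := by
      rw [← Matrix.mul_assoc, Matrix.mul_sub, Matrix.mul_one, horth, sub_zero]
    have h2 : ((1 - Pf) * U) * P = P * U := by
      rw [Matrix.mul_assoc, hcomm, ← Matrix.mul_assoc, Matrix.sub_mul,
        Matrix.one_mul, horth', sub_zero]
    rw [h1, h2]
  -- hence with its powers
  have hck : ∀ k : ℕ, P * ((1 - Pf) * U) ^ k = ((1 - Pf) * U) ^ k * P := by
    intro k
    induction k with
    | zero => simp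
    | succ k ih =>
      rw [pow_succ, ← Matrix.mul_assoc, ih, Matrix.mul_assoc, hc1,
        ← Matrix.mul_assoc]
  intro t ht
  have key : Pf * U * ((1 - Pf) * U) ^ (t - 1) * ρ₀ = 0 := by
    calc Pf * U * ((1 - Pf) * U) ^ (t - 1) * ρ₀
        = Pf * U * ((1 - Pf) * U) ^ (t - 1) * (P * ρ₀ * P) := by rw [hsupp]
      _ = Pf * (U * (((1 - Pf) * U) ^ (t - 1) * P)) * (ρ₀ * P) := by
          simp only [Matrix.mul_assoc]
      _ = Pf * (U * (P * ((1 - Pf) * U) ^ (t - 1))) * (ρ₀ * P) := by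
          rw [hck]
      _ = Pf * P * (U * ((1 - Pf) * U) ^ (t - 1)) * (ρ₀ * P) := by
          rw [← Matrix.mul_assoc U P, hcomm]
          simp only [Matrix.mul_assoc]
      _ = 0 := by rw [horth', Matrix.zero_mul, Matrix.zero_mul]
  rw [key, Matrix.zero_mul, Matrix.zero_mul, Matrix.zero_mul, Matrix.trace_zero]
end

section
/- Under the same hypotheses, if the initial pure state |Ψ⟩ has nonzero overlap with the range of P̂ (P̂|Ψ⟩ ≠ 0), then the total probability of ever arriving at the final vertex, Σ_{t≥1} p(t), is at most 1 − ‖P̂|Ψ⟩‖², which is strictly less than 1; hence the hitting time Σ_t t·p(t)/(normalization) is infinite (the measured walk never hits with probability 1). -/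
open Matrix

set_option linter.unusedSectionVars false

section Aux
variable {n : Type*} [Fintype n] [DecidableEq n]

noncomputable def eno (x : n → ℂ) : ℝ := (star x ⬝ᵥ x).re

lemma eno_eq (x : n → ℂ) : eno x = ∑ i, Complex.normSq (x i) := by
  simp [eno, dotProduct, Complex.re_sum]
  exact Finset.sum_congr rfl fun i _ => by
    simp [Complex.normSq_apply]

lemma eno_nonneg (x : n → ℂ) : 0 ≤ eno x := by
  rw [eno_eq]; exact Finset.sum_nonneg fun i _ => Complex.normSq_nonneg _

lemma eno_pos {x : n → ℂ} (hx : x ≠ 0) : 0 < eno x := by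
  rcases (eno_nonneg x).lt_or_eq with h | h
  · exact h
  · exfalso; apply hx; funext i
    have := (Finset.sum_eq_zero_iff_of_nonneg (fun i _ => Complex.normSq_nonneg (x i))).1
      (by rw [← eno_eq, ← h]) i (Finset.mem_univ i)
    simpa using Complex.normSq_eq_zero.1 this

lemma one_sub_proj {Q : Matrix n n ℂ} (h : Q * Q = Q) : (1 - Q) * (1 - Q) = 1 - Q := by
  rw [sub_mul, one_mul, mul_sub, mul_one, h]; abel

lemma mul_vecMulVec' (A : Matrix n n ℂ) (a b : n → ℂ) :
    A * vecMulVec a b = vecMulVec (A *ᵥ a) b := by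
  ext i j
  simp [Matrix.mul_apply, vecMulVec_apply, mulVec, dotProduct, Finset.sum_mul, mul_assoc]

lemma vecMulVec_mul' (a b : n → ℂ) (A : Matrix n n ℂ) :
    vecMulVec a b * A = vecMulVec a (b ᵥ* A) := by
  ext i j
  simp [Matrix.mul_apply, vecMulVec_apply, vecMul, dotProduct, Finset.mul_sum, mul_assoc]

lemma dp_mul (A B : Matrix n n ℂ) (x y : n → ℂ) :
    star (A *ᵥ x) ⬝ᵥ (B *ᵥ y) = star x ⬝ᵥ ((Aᴴ * B) *ᵥ y) := by
  rw [star_mulVec, dotProduct_mulVec, dotProduct_mulVec, vecMul_vecMul]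

/-- unitary preserves `eno` -/
lemma eno_unitary {U : Matrix n n ℂ} (hU : Uᴴ * U = 1) (x : n → ℂ) :
    eno (U *ᵥ x) = eno x := by
  unfold eno
  rw [dp_mul, hU, one_mulVec]

/-- Pythagoras for an orthogonal projection. -/
lemma eno_pyth {Q : Matrix n n ℂ} (hQ2 : Q * Q = Q) (hQsa : Qᴴ = Q) (x : n → ℂ) :
    eno x = eno (Q *ᵥ x) + eno ((1 - Q) *ᵥ x) := by
  unfold eno
  rw [dp_mul, dp_mul, hQsa, hQ2]
  have h1 : (1 - Q)ᴴ * (1 - Q) = 1 - Q := by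
    rw [conjTranspose_sub, conjTranspose_one, hQsa, one_sub_proj hQ2]
  have h2 : Q + (1 - Q) = 1 := by abel
  rw [h1, ← Complex.add_re, ← dotProduct_add, ← add_mulVec, h2, one_mulVec]

lemma eno_proj_le {Q : Matrix n n ℂ} (hQ2 : Q * Q = Q) (hQsa : Qᴴ = Q) (x : n → ℂ) :
    eno (Q *ᵥ x) ≤ eno x := by
  rw [eno_pyth hQ2 hQsa x]
  have := eno_nonneg ((1 - Q) *ᵥ x)
  linarith

end Aux

/-- If the initial pure state `|Ψ⟩` has nonzero overlap with the range of a
projection `P̂` that commutes with `U` and is orthogonal to the final-vertex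
projection `P̂_f`, then the total probability of ever arriving at the final
vertex satisfies `Σ_{t≥1} p(t) ≤ 1 − ‖P̂|Ψ⟩‖² < 1`; hence the measured walk
never hits with probability 1 and the hitting time is infinite. -/
theorem overlap_with_dark_space_gives_infinite_hitting_time
    {n : Type*} [Fintype n] [DecidableEq n]
    (U Pf P : Matrix n n ℂ)
    (hU : U ∈ Matrix.unitaryGroup n ℂ)
    (hPf2 : Pf * Pf = Pf) (hPfsa : Pfᴴ = Pf)
    (hP2 : P * P = P) (hPsa : Pᴴ = P)
    (horth : P * Pf = 0) (hcomm : U * P = P * U)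
    (ψ : n → ℂ) (hψ : star ψ ⬝ᵥ ψ = 1) (hover : P *ᵥ ψ ≠ 0) :
    (∑' t : ℕ,
        ((Pf * U * ((1 - Pf) * U) ^ t * vecMulVec ψ (star ψ) *
          (Uᴴ * (1 - Pf)) ^ t * Uᴴ * Pf).trace).re)
      ≤ 1 - (star (P *ᵥ ψ) ⬝ᵥ (P *ᵥ ψ)).re ∧
    1 - (star (P *ᵥ ψ) ⬝ᵥ (P *ᵥ ψ)).re < 1 := by
  have hUu : Uᴴ * U = 1 := hU.1
  set Q : Matrix n n ℂ := 1 - Pf with hQdef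
  set c : ℝ := (star (P *ᵥ ψ) ⬝ᵥ (P *ᵥ ψ)).re with hcdef
  have hc : c = eno (P *ᵥ ψ) := rfl
  -- the t-th summand equals eno of a vector
  set M : ℕ → Matrix n n ℂ := fun t => Pf * U * (Q * U) ^ t with hMdef
  have hterm : ∀ t : ℕ,
      ((Pf * U * (Q * U) ^ t * vecMulVec ψ (star ψ) *
        (Uᴴ * Q) ^ t * Uᴴ * Pf).trace).re = eno (M t *ᵥ ψ) := by
    intro t
    have hQsa : Qᴴ = Q := by
      rw [hQdef, conjTranspose_sub, conjTranspose_one, hPfsa]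
    have hMH : (Uᴴ * Q) ^ t * Uᴴ * Pf = (M t)ᴴ := by
      rw [hMdef]
      simp only [conjTranspose_mul, conjTranspose_pow, conjTranspose_mul, hQsa, hPfsa]
      rw [Matrix.mul_assoc]
    have hre : Pf * U * (Q * U) ^ t * vecMulVec ψ (star ψ) * (Uᴴ * Q) ^ t * Uᴴ * Pf
        = M t * vecMulVec ψ (star ψ) * (M t)ᴴ := by
      rw [hMdef, ← hMH]
      simp only [Matrix.mul_assoc]
    rw [hre]
    have hmat : M t * vecMulVec ψ (star ψ) * (M t)ᴴ
        = vecMulVec (M t *ᵥ ψ) (star (M t *ᵥ ψ)) := by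
      rw [mul_vecMulVec', vecMulVec_mul', ← star_mulVec]
    rw [hmat]
    have : (vecMulVec (M t *ᵥ ψ) (star (M t *ᵥ ψ))).trace
        = star (M t *ᵥ ψ) ⬝ᵥ (M t *ᵥ ψ) := by
      simp [Matrix.trace, Matrix.diag, vecMulVec_apply, dotProduct, mul_comm]
    rw [this]; rfl
  -- telescoping
  set g : ℕ → ℝ := fun t => eno ((Q * U) ^ t *ᵥ ψ) with hgdef
  have hQ2 : Q * Q = Q := by
    rw [hQdef]; exact one_sub_proj hPf2
  have hQsa : Qᴴ = Q := by
    rw [hQdef, conjTranspose_sub, conjTranspose_one, hPfsa]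
  have hstep : ∀ t : ℕ, eno (M t *ᵥ ψ) = g t - g (t + 1) := by
    intro t
    have h1 : g t = eno (U *ᵥ ((Q * U) ^ t *ᵥ ψ)) := (eno_unitary hUu _).symm
    have h2 : eno (U *ᵥ ((Q * U) ^ t *ᵥ ψ))
        = eno (Pf *ᵥ (U *ᵥ ((Q * U) ^ t *ᵥ ψ)))
          + eno ((1 - Pf) *ᵥ (U *ᵥ ((Q * U) ^ t *ᵥ ψ))) :=
      eno_pyth hPf2 hPfsa _
    have h3 : Pf *ᵥ (U *ᵥ ((Q * U) ^ t *ᵥ ψ)) = M t *ᵥ ψ := by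
      rw [hMdef]; simp [mulVec_mulVec, Matrix.mul_assoc]
    have h4 : (1 - Pf) *ᵥ (U *ᵥ ((Q * U) ^ t *ᵥ ψ)) = (Q * U) ^ (t + 1) *ᵥ ψ := by
      rw [← hQdef, pow_succ']
      simp [mulVec_mulVec, Matrix.mul_assoc]
    rw [h3, h4] at h2
    rw [h1] at *
    have : g (t + 1) = eno ((Q * U) ^ (t + 1) *ᵥ ψ) := rfl
    rw [this]; linarith
  -- lower bound g t ≥ c
  have hPQ : ∀ t : ℕ, P * (Q * U) ^ t = U ^ t * P := by
    intro t
    induction t with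
    | zero => simp
    | succ t ih =>
      rw [pow_succ, pow_succ, ← Matrix.mul_assoc, ih, Matrix.mul_assoc, Matrix.mul_assoc]
      congr 1
      have hPQU : P * (Q * U) = P * U := by
        rw [← Matrix.mul_assoc, hQdef, mul_sub, mul_one, horth, sub_zero]
      rw [hPQU, hcomm]
  have hUpow : ∀ t : ℕ, (U ^ t)ᴴ * U ^ t = 1 := by
    intro t
    induction t with
    | zero => simp
    | succ t ih =>
      rw [pow_succ', conjTranspose_mul, Matrix.mul_assoc, ← Matrix.mul_assoc Uᴴ, hUu,
        Matrix.one_mul, ih]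
  have hglb : ∀ t : ℕ, c ≤ g t := by
    intro t
    have h1 : eno (P *ᵥ ((Q * U) ^ t *ᵥ ψ)) ≤ g t := eno_proj_le hP2 hPsa _
    have h2 : P *ᵥ ((Q * U) ^ t *ᵥ ψ) = U ^ t *ᵥ (P *ᵥ ψ) := by
      rw [mulVec_mulVec, hPQ t, ← mulVec_mulVec]
    rw [h2] at h1
    rw [hc, ← eno_unitary (hUpow t) (P *ᵥ ψ)]
    exact h1
  have hg0 : g 0 = 1 := by
    simp only [hgdef, pow_zero, one_mulVec]
    unfold eno; rw [hψ]; simp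
  have hcpos : 0 < c := by rw [hc]; exact eno_pos hover
  have hc1 : c ≤ 1 := by rw [← hg0]; exact hglb 0
  constructor
  · apply Real.tsum_le_of_sum_range_le
    · intro t; rw [hterm t]; exact eno_nonneg _
    · intro N
      have : ∑ t ∈ Finset.range N,
          ((Pf * U * (Q * U) ^ t * vecMulVec ψ (star ψ) * (Uᴴ * Q) ^ t * Uᴴ * Pf).trace).re
          = ∑ t ∈ Finset.range N, (g t - g (t + 1)) := by
        exact Finset.sum_congr rfl fun t _ => by rw [hterm t, hstep t]
      rw [this, Finset.sum_range_sub' g N, hg0]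
      have := hglb N
      linarith
  · linarith
end
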